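/- Cutting is inverse to amalgamation of seeds: (a) if seeds Σ₁, Σ₂ are glueable along frozen subsets Δ₁ ⊆ x₁\ex₁, Δ₂ ⊆ x₂\ex₂ (i.e. the full subseeds on Δ₁ and Δ₂ are isomorphic) and Σ = Σ₁ ⊔_{Δ₁,Δ₂} Σ₂ is their amalgamated sum with common image Δ, then Δ separates x₁\Δ and x₂\Δ in Σ and d^i_Δ Σ ≅ Σᵢ for i = 1,2; (b) conversely, if Δ separates x₁ and x₂ in a seed Σ, then d¹_Δ Σ and d²_Δ Σ are glueable along the images of Δ and d¹_Δ Σ ⊔_{Δ,Δ} d²_Δ Σ ≅ Σ. -/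

import Mathlib

open scoped BigOperators
open scoped Classical

noncomputable section

universe u v w x₀

/-- A seed in an ambient field `K`: a cluster of elements of `K`, a distinguished subset
of exchangeable variables, and an exchange matrix indexed by `K` (only the entries on
the cluster are relevant). -/
structure Seed (K : Type u) [Field K] : Type u where
  cluster : Set K
  ex : Set K
  ex_subset : ex ⊆ cluster
  B : K → K → ℤ

/-- Fomin–Zelevinsky matrix mutation in direction `k`. -/
def mutB {I : Type u} (B : I → I → ℤ) (k : I) : I → I → ℤ := fun y z =>
  if y = k ∨ z = k then -B y z
  else B y z + (|B y k| * B k z + B y k * |B k z|) / 2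

namespace Seed

variable {K : Type u} {L : Type v} [Field K] [Field L]

/-- Local finiteness of the exchange matrix of a seed. -/
def LocFinite (S : Seed K) : Prop :=
  ∀ y ∈ S.cluster,
    {z | z ∈ S.cluster ∧ S.B y z ≠ 0}.Finite ∧ {z | z ∈ S.cluster ∧ S.B z y ≠ 0}.Finite

/-- Skew-symmetrisability witnessed by a family `d` of positive integers. -/
def SkewSymmetrizableWith (S : Seed K) (d : K → ℤ) : Prop :=
  (∀ y ∈ S.cluster, 0 < d y) ∧
    ∀ y ∈ S.cluster, ∀ z ∈ S.cluster, d y * S.B y z = -(d z * S.B z y)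

def SkewSymmetrizable (S : Seed K) : Prop := ∃ d, S.SkewSymmetrizableWith d

/-- The new cluster variable created by mutation of `S` in direction `x`:
`x * x' = ∏_{b_{xy} > 0} y ^ (b_{xy}) + ∏_{b_{xy} < 0} y ^ (-b_{xy})`. -/
def mutVar (S : Seed K) (x : K) : K :=
  ((∏ᶠ y ∈ {y | y ∈ S.cluster ∧ 0 < S.B x y}, y ^ (S.B x y).toNat) +
      ∏ᶠ y ∈ {y | y ∈ S.cluster ∧ S.B x y < 0}, y ^ (-S.B x y).toNat) / x

/-- Mutation of a seed in direction `x`. -/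
def mutate (S : Seed K) (x : K) : Seed K where
  cluster := insert (S.mutVar x) (S.cluster \ {x})
  ex := insert (S.mutVar x) (S.ex \ {x})
  ex_subset := Set.insert_subset_insert (Set.diff_subset_diff_left S.ex_subset)
  B := fun y z =>
    mutB S.B x (if y = S.mutVar x then x else y) (if z = S.mutVar x then x else z)

/-- The correspondence `μ_{x,Σ}` on cluster variables. -/
def mutMap (S : Seed K) (x : K) : K → K := fun y => if y = x then S.mutVar x else y

/-- Iterated mutation along a list of directions. -/
def mutateSeq (S : Seed K) : List K → Seed K
  | [] => S
  | y :: l => (S.mutate y).mutateSeq l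

/-- A sequence is `Σ`-admissible if each entry is exchangeable in the seed obtained by
mutating along the previous entries. -/
def Admissible (S : Seed K) : List K → Prop
  | [] => True
  | y :: l => y ∈ S.ex ∧ (S.mutate y).Admissible l

/-- The correspondence `μ_{x_n} ∘ ⋯ ∘ μ_{x_1, Σ}` on cluster variables. -/
def mutSeqMap (S : Seed K) : List K → K → K
  | [] => id
  | y :: l => (S.mutate y).mutSeqMap l ∘ S.mutMap y

/-- The set of all cluster variables of the rooted cluster algebra of `S`. -/
def clusterVars (S : Seed K) : Set K :=
  ⋃ (l : List K) (_ : S.Admissible l), (S.mutateSeq l).cluster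

/-- The rooted cluster algebra of `S`, as a subring (ℤ-subalgebra) of the ambient field. -/
def algebra (S : Seed K) : Subring K := Subring.closure S.clusterVars

/-- Equality of seeds (exchange matrices are compared on the cluster only). -/
def SameSeed (S T : Seed K) : Prop :=
  S.cluster = T.cluster ∧ S.ex = T.ex ∧
    ∀ y ∈ S.cluster, ∀ z ∈ S.cluster, S.B y z = T.B y z

/-- The opposite seed. -/
def op (S : Seed K) : Seed K := ⟨S.cluster, S.ex, S.ex_subset, fun y z => -S.B y z⟩

/-- The simplification of a seed: all exchange matrix entries between pairs of frozen
variables are set to zero. -/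
def simplify (S : Seed K) : Seed K :=
  ⟨S.cluster, S.ex, S.ex_subset, fun y z =>
    if y ∈ S.cluster \ S.ex ∧ z ∈ S.cluster \ S.ex then 0 else S.B y z⟩

/-- The full subseed of `S` on a subset `s` of the cluster. -/
def subseed (S : Seed K) (s : Set K) : Seed K :=
  ⟨s, S.ex ∩ s, Set.inter_subset_right, S.B⟩

/-- The lower bound `ℤ[x \ ex][ex ∪ ex']` of the cluster algebra. -/
def lowerBound (S : Seed K) : Subring K :=
  Subring.closure (S.cluster ∪ ⋃ y ∈ S.ex, (S.mutate y).ex)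

/-- The ring of Laurent polynomials `ℤ[x \ ex][e^{±1}]`. -/
def laurentRing (S : Seed K) (e : Set K) : Subring K :=
  Subring.closure ((S.cluster \ S.ex) ∪ e ∪ (fun a => a⁻¹) '' e)

/-- The upper bound `ℤ[x\ex][ex^{±1}] ∩ ⋂_{y ∈ ex} ℤ[x\ex][μ_y(ex)^{±1}]`. -/
def upperBound (S : Seed K) : Subring K :=
  S.laurentRing S.ex ⊓ ⨅ y ∈ S.ex, S.laurentRing (S.mutate y).ex

end Seed

/-- An isomorphism of seeds along a map `φ` of ambient fields. -/
def SeedIso {K : Type u} {L : Type v} [Field K] [Field L]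
    (S : Seed K) (T : Seed L) (φ : K → L) : Prop :=
  Set.BijOn φ S.cluster T.cluster ∧ Set.BijOn φ S.ex T.ex ∧
    ∀ y ∈ S.cluster, ∀ z ∈ S.cluster, T.B (φ y) (φ z) = S.B y z

def IsIsoSeeds {K : Type u} {L : Type v} [Field K] [Field L]
    (S : Seed K) (T : Seed L) : Prop :=
  ∃ φ : K → L, SeedIso S T φ

/-- A genuine seed: a countable, algebraically independent cluster generating the
ambient field, with a locally finite skew-symmetrisable exchange matrix. -/
structure IsSeed {K : Type u} [Field K] (S : Seed K) : Prop where
  countable : S.cluster.Countable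
  free : AlgebraicIndependent ℤ ((↑) : S.cluster → K)
  ambient : Subfield.closure S.cluster = ⊤
  locFin : S.LocFinite
  skew : S.SkewSymmetrizable

/-- The map on ambient fields underlying a ring homomorphism defined on a subring
(extended by zero outside the subring). -/
def subFn {K : Type u} {L : Type v} [Field K] [Field L] {R : Subring K}
    (f : R →+* L) : K → L :=
  fun a => if h : a ∈ R then f ⟨a, h⟩ else 0

/-- The map on ambient fields underlying a ring homomorphism between rooted cluster
algebras (extended by zero outside of `A(S)`). -/
def mapFn {K : Type u} {L : Type v} [Field K] [Field L] (S : Seed K) {T : Seed L}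
    (f : S.algebra →+* T.algebra) : K → L :=
  fun a => if h : a ∈ S.algebra then (f ⟨a, h⟩ : L) else 0

/-- A sequence is biadmissible when it is admissible for the source seed and its image
is admissible for the target seed. -/
def Biadmissible {K : Type u} {L : Type v} [Field K] [Field L]
    (S : Seed K) (T : Seed L) (g : K → L) (l : List K) : Prop :=
  S.Admissible l ∧ T.Admissible (l.map g)

/-- The rooted cluster morphism conditions (CM1), (CM2), (CM3) for a ring homomorphism
`f : A(S) →+* A(T)`. -/
structure IsRCM {K : Type u} {L : Type v} [Field K] [Field L]
    (S : Seed K) (T : Seed L) (f : S.algebra →+* T.algebra) : Prop where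
  cm1 : ∀ y ∈ S.cluster, mapFn S f y ∈ T.cluster ∪ Set.range ((↑) : ℤ → L)
  cm2 : ∀ y ∈ S.ex, mapFn S f y ∈ T.ex ∪ Set.range ((↑) : ℤ → L)
  cm3 : ∀ l : List K, Biadmissible S T (mapFn S f) l → ∀ y ∈ S.cluster,
    mapFn S f (S.mutSeqMap l y) = T.mutSeqMap (l.map (mapFn S f)) (mapFn S f y)

/-- The image seed `f(Σ) = (x' ∩ f(x), ex' ∩ f(ex), B'[f(x)])` of a morphism. -/
def imageSeed {K : Type u} {L : Type v} [Field K] [Field L] (S : Seed K) {T : Seed L}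
    (f : S.algebra →+* T.algebra) : Seed L :=
  ⟨T.cluster ∩ (mapFn S f '' S.cluster), T.ex ∩ (mapFn S f '' S.ex),
    Set.inter_subset_inter T.ex_subset (Set.image_mono S.ex_subset), T.B⟩

/-- A bundled object of the category of rooted cluster algebras: an ambient field
together with a seed in it. -/
structure ClusObj : Type (x₀ + 1) where
  carrier : Type x₀
  [fieldStr : Field carrier]
  seed : Seed carrier

attribute [instance] ClusObj.fieldStr

/-- `Δ` separates `s₁` and `s₂` in the seed `S`. -/
def Separates {K : Type u} [Field K] (S : Seed K) (Δ s₁ s₂ : Set K) : Prop :=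
  Δ ⊆ S.cluster \ S.ex ∧ S.cluster = s₁ ∪ s₂ ∪ Δ ∧
    Disjoint s₁ s₂ ∧ Disjoint s₁ Δ ∧ Disjoint s₂ Δ ∧
    ∀ y ∈ s₁, ∀ z ∈ s₂, S.B y z = 0 ∧ S.B z y = 0

/-- Two seeds are glueable along frozen subsets `Δ₁`, `Δ₂` via `φ` when the full
subseeds on `Δ₁` and `Δ₂` are isomorphic along `φ`. -/
def Glueable {K : Type u} {L : Type v} [Field K] [Field L] (S₁ : Seed K) (S₂ : Seed L)
    (Δ₁ : Set K) (Δ₂ : Set L) (φ : K → L) : Prop :=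
  Δ₁ ⊆ S₁.cluster \ S₁.ex ∧ Δ₂ ⊆ S₂.cluster \ S₂.ex ∧
    SeedIso (S₁.subseed Δ₁) (S₂.subseed Δ₂) φ

/-- `Sg` is the amalgamated sum of `S₁` and `S₂` along `Δ₁ ≅ Δ₂`, with respect to the
identifications `e₁`, `e₂` of the ambient variables. -/
structure IsAmalgamatedSum {K : Type u} {L : Type v} {F : Type w}
    [Field K] [Field L] [Field F]
    (S₁ : Seed K) (S₂ : Seed L) (Δ₁ : Set K) (Δ₂ : Set L) (φ : K → L)
    (Sg : Seed F) (e₁ : K → F) (e₂ : L → F) : Prop where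
  inj₁ : Set.InjOn e₁ S₁.cluster
  inj₂ : Set.InjOn e₂ S₂.cluster
  compat : ∀ z ∈ Δ₁, e₁ z = e₂ (φ z)
  glueDelta : e₁ '' Δ₁ = e₂ '' Δ₂
  disj₁ : (e₁ '' (S₁.cluster \ Δ₁)) ∩ (e₂ '' S₂.cluster) = ∅
  disj₂ : (e₂ '' (S₂.cluster \ Δ₂)) ∩ (e₁ '' S₁.cluster) = ∅
  cluster_eq : Sg.cluster = e₁ '' S₁.cluster ∪ e₂ '' S₂.cluster
  ex_eq : Sg.ex = e₁ '' S₁.ex ∪ e₂ '' S₂.ex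
  matrix₁ : ∀ y ∈ S₁.cluster, ∀ z ∈ S₁.cluster, Sg.B (e₁ y) (e₁ z) = S₁.B y z
  matrix₂ : ∀ y ∈ S₂.cluster, ∀ z ∈ S₂.cluster, Sg.B (e₂ y) (e₂ z) = S₂.B y z
  matrix₀ : ∀ y ∈ S₁.cluster \ Δ₁, ∀ z ∈ S₂.cluster \ Δ₂,
    Sg.B (e₁ y) (e₂ z) = 0 ∧ Sg.B (e₂ z) (e₁ y) = 0

/-- cutting is inverse to amalgamation: (a) the amalgamated sum of two
glueable seeds is separated by the glued frozen variables and its cut seeds recover the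
original seeds; (b) a seed with a separating family of frozen variables is the
amalgamated sum of its two cut seeds. -/
theorem cutting_amalgamation :
    (∀ {K : Type u} {L : Type v} {F : Type w} [Field K] [Field L] [Field F]
        (S₁ : Seed K) (S₂ : Seed L) (Sg : Seed F)
        (Δ₁ : Set K) (Δ₂ : Set L) (φ : K → L) (e₁ : K → F) (e₂ : L → F),
        IsSeed S₁ → IsSeed S₂ → IsSeed Sg →
        Glueable S₁ S₂ Δ₁ Δ₂ φ →
        IsAmalgamatedSum S₁ S₂ Δ₁ Δ₂ φ Sg e₁ e₂ →
        Separates Sg (e₁ '' Δ₁) (e₁ '' (S₁.cluster \ Δ₁)) (e₂ '' (S₂.cluster \ Δ₂)) ∧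
          SeedIso S₁ (Sg.subseed (e₁ '' S₁.cluster)) e₁ ∧
          SeedIso S₂ (Sg.subseed (e₂ '' S₂.cluster)) e₂) ∧
    (∀ {K : Type u} [Field K] (S : Seed K) (Δ s₁ s₂ : Set K),
        IsSeed S → Separates S Δ s₁ s₂ →
        Glueable (S.subseed (s₁ ∪ Δ)) (S.subseed (s₂ ∪ Δ)) Δ Δ id ∧
          IsAmalgamatedSum (S.subseed (s₁ ∪ Δ)) (S.subseed (s₂ ∪ Δ)) Δ Δ id S id id) := by
  constructor
  · intro K L F _ _ _ S₁ S₂ Sg Δ₁ Δ₂ φ e₁ e₂ _ _ _ hGl hAm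
    obtain ⟨hΔ₁, hΔ₂, hiso⟩ := hGl
    obtain ⟨inj₁, inj₂, compat, glueD, disj₁, disj₂, clE, exE, m₁, m₂, m₀⟩ := hAm
    have hΔ₁c : Δ₁ ⊆ S₁.cluster := fun z hz => (hΔ₁ hz).1
    have hΔ₂c : Δ₂ ⊆ S₂.cluster := fun z hz => (hΔ₂ hz).1
    have hφ : ∀ z ∈ Δ₁, φ z ∈ Δ₂ := fun z hz => hiso.1.mapsTo hz
    have hΔin₂ : e₁ '' Δ₁ ⊆ e₂ '' S₂.cluster := by
      rw [glueD]; exact Set.image_mono hΔ₂c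
    have hΔin₁ : e₁ '' Δ₁ ⊆ e₁ '' S₁.cluster := Set.image_mono hΔ₁c
    have hs₁sub : e₁ '' (S₁.cluster \ Δ₁) ⊆ e₁ '' S₁.cluster :=
      Set.image_mono Set.diff_subset
    have hs₂sub : e₂ '' (S₂.cluster \ Δ₂) ⊆ e₂ '' S₂.cluster :=
      Set.image_mono Set.diff_subset
    have d₁ : Disjoint (e₁ '' (S₁.cluster \ Δ₁)) (e₂ '' S₂.cluster) :=
      Set.disjoint_iff_inter_eq_empty.mpr disj₁
    have d₂ : Disjoint (e₂ '' (S₂.cluster \ Δ₂)) (e₁ '' S₁.cluster) :=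
      Set.disjoint_iff_inter_eq_empty.mpr disj₂
    have hex₂ : S₂.ex ⊆ S₂.cluster \ Δ₂ := fun w hw =>
      ⟨S₂.ex_subset hw, fun hwΔ => (hΔ₂ hwΔ).2 hw⟩
    have hex₁ : S₁.ex ⊆ S₁.cluster \ Δ₁ := fun w hw =>
      ⟨S₁.ex_subset hw, fun hwΔ => (hΔ₁ hwΔ).2 hw⟩
    have exEq₁ : e₁ '' S₁.ex = Sg.ex ∩ e₁ '' S₁.cluster := by
      apply Set.Subset.antisymm
      · intro a ha
        exact ⟨exE ▸ Or.inl ha, Set.image_mono S₁.ex_subset ha⟩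
      · rintro a ⟨hae, y, hy, rfl⟩
        rw [exE] at hae
        rcases hae with ⟨w, hw, hew⟩ | ⟨w, hw, hew⟩
        · rw [inj₁ (S₁.ex_subset hw) hy hew] at hw
          exact ⟨y, hw, rfl⟩
        · exact (Set.eq_empty_iff_forall_notMem.mp disj₂ (e₁ y)
            ⟨⟨w, hex₂ hw, hew⟩, ⟨y, hy, rfl⟩⟩).elim
    have exEq₂ : e₂ '' S₂.ex = Sg.ex ∩ e₂ '' S₂.cluster := by
      apply Set.Subset.antisymm
      · intro a ha
        exact ⟨exE ▸ Or.inr ha, Set.image_mono S₂.ex_subset ha⟩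
      · rintro a ⟨hae, y, hy, rfl⟩
        rw [exE] at hae
        rcases hae with ⟨w, hw, hew⟩ | ⟨w, hw, hew⟩
        · exact (Set.eq_empty_iff_forall_notMem.mp disj₁ (e₂ y)
            ⟨⟨w, hex₁ hw, hew⟩, ⟨y, hy, rfl⟩⟩).elim
        · rw [inj₂ (S₂.ex_subset hw) hy hew] at hw
          exact ⟨y, hw, rfl⟩
    refine ⟨⟨?_, ?_, ?_, ?_, ?_, ?_⟩, ?_, ?_⟩
    · rintro _ ⟨z, hz, rfl⟩
      refine ⟨clE ▸ Or.inl ⟨z, hΔ₁c hz, rfl⟩, ?_⟩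
      rw [exE]
      rintro (⟨y, hy, hey⟩ | ⟨y, hy, hey⟩)
      · exact (hΔ₁ hz).2 (inj₁ (S₁.ex_subset hy) (hΔ₁c hz) hey ▸ hy)
      · have h1 : e₂ y = e₂ (φ z) := hey.trans (compat z hz)
        have h2 : y = φ z := inj₂ (S₂.ex_subset hy) (hΔ₂c (hφ z hz)) h1
        exact (hΔ₂ (hφ z hz)).2 (h2 ▸ hy)
    · have h1 : e₁ '' S₁.cluster = e₁ '' (S₁.cluster \ Δ₁) ∪ e₁ '' Δ₁ := by
        rw [← Set.image_union, Set.diff_union_of_subset hΔ₁c]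
      have h2 : e₂ '' S₂.cluster = e₂ '' (S₂.cluster \ Δ₂) ∪ e₁ '' Δ₁ := by
        rw [glueD, ← Set.image_union, Set.diff_union_of_subset hΔ₂c]
      rw [clE, h1, h2]
      ext a; simp only [Set.mem_union]; tauto
    · exact d₁.mono_right hs₂sub
    · exact d₁.mono_right hΔin₂
    · exact d₂.mono_right hΔin₁
    · rintro _ ⟨y, hy, rfl⟩ _ ⟨z, hz, rfl⟩
      exact m₀ y hy z hz
    · refine ⟨inj₁.bijOn_image, ?_, fun y hy z hz => m₁ y hy z hz⟩
      have : (Sg.subseed (e₁ '' S₁.cluster)).ex = e₁ '' S₁.ex := by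
        show Sg.ex ∩ e₁ '' S₁.cluster = _
        rw [exEq₁]
      rw [this]
      exact (inj₁.mono S₁.ex_subset).bijOn_image
    · refine ⟨inj₂.bijOn_image, ?_, fun y hy z hz => m₂ y hy z hz⟩
      have : (Sg.subseed (e₂ '' S₂.cluster)).ex = e₂ '' S₂.ex := by
        show Sg.ex ∩ e₂ '' S₂.cluster = _
        rw [exEq₂]
      rw [this]
      exact (inj₂.mono S₂.ex_subset).bijOn_image
  · intro K _ S Δ s₁ s₂ _ hsep
    obtain ⟨hΔ, hcl, d12, d1Δ, d2Δ, hB⟩ := hsep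
    have hexeq : (S.ex ∩ (s₁ ∪ Δ)) ∩ Δ = (S.ex ∩ (s₂ ∪ Δ)) ∩ Δ := by
      ext a
      simp only [Set.mem_inter_iff, Set.mem_union]
      tauto
    constructor
    · refine ⟨?_, ?_, ?_, ?_, ?_⟩
      · intro z hz
        exact ⟨Or.inr hz, fun hze => (hΔ hz).2 hze.1⟩
      · intro z hz
        exact ⟨Or.inr hz, fun hze => (hΔ hz).2 hze.1⟩
      · show Set.BijOn id Δ Δ
        exact Set.bijOn_id Δ
      · show Set.BijOn id ((S.ex ∩ (s₁ ∪ Δ)) ∩ Δ) ((S.ex ∩ (s₂ ∪ Δ)) ∩ Δ)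
        rw [← hexeq]
        exact Set.bijOn_id _
      · intro y _ z _
        rfl
    · have hmem₁ : ∀ y ∈ (s₁ ∪ Δ : Set K) \ Δ, y ∈ s₁ := by
        rintro y ⟨hy | hy, hny⟩
        · exact hy
        · exact absurd hy hny
      have hmem₂ : ∀ y ∈ (s₂ ∪ Δ : Set K) \ Δ, y ∈ s₂ := by
        rintro y ⟨hy | hy, hny⟩
        · exact hy
        · exact absurd hy hny
      refine ⟨Set.injOn_id _, Set.injOn_id _, fun z _ => rfl, rfl, ?_, ?_, ?_, ?_,
        fun y _ z _ => rfl, fun y _ z _ => rfl, ?_⟩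
      · simp only [Set.image_id]
        apply Set.eq_empty_iff_forall_notMem.mpr
        rintro a ⟨ha1, ha2 | ha2⟩
        · exact Set.disjoint_left.mp d12 (hmem₁ a ha1) ha2
        · exact ha1.2 ha2
      · simp only [Set.image_id]
        apply Set.eq_empty_iff_forall_notMem.mpr
        rintro a ⟨ha1, ha2 | ha2⟩
        · exact Set.disjoint_left.mp d12 ha2 (hmem₂ a ha1)
        · exact ha1.2 ha2
      · simp only [Set.image_id]
        show S.cluster = (s₁ ∪ Δ) ∪ (s₂ ∪ Δ)
        rw [hcl]
        ext a; simp only [Set.mem_union]; tauto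
      · simp only [Set.image_id]
        show S.ex = S.ex ∩ (s₁ ∪ Δ) ∪ S.ex ∩ (s₂ ∪ Δ)
        ext a
        simp only [Set.mem_union, Set.mem_inter_iff]
        constructor
        · intro ha
          have := hcl ▸ S.ex_subset ha
          rcases this with (h | h) | h
          · exact Or.inl ⟨ha, Or.inl h⟩
          · exact Or.inr ⟨ha, Or.inl h⟩
          · exact Or.inl ⟨ha, Or.inr h⟩
        · rintro (⟨ha, _⟩ | ⟨ha, _⟩) <;> exact ha
      · intro y hy z hz
        exact hB y (hmem₁ y hy) z (hmem₂ z hz)
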